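/- Let n ≥ 2 and 2 ≤ k ≤ n. Let A and B be real symmetric n×n matrices with A ∈ Γ_{k-1} and B ∈ Γ_{k-1}. Then A + B ∈ Γ_{k-1} and σ_k(A+B)/σ_{k-1}(A+B) ≥ σ_k(A)/σ_{k-1}(A) + σ_k(B)/σ_{k-1}(B). -/

import Mathlib

/-- The `j`-th elementary symmetric polynomial of `lam : Fin n → ℝ`:
`σ_j(λ) = ∑_{1 ≤ i₁ < ⋯ < i_j ≤ n} λ_{i₁} ⋯ λ_{i_j}`, with `σ_0(λ) = 1`. -/
noncomputable def esymmVec (n j : ℕ) (lam : Fin n → ℝ) : ℝ :=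
  ∑ S ∈ Finset.univ.powersetCard j, ∏ i ∈ S, lam i

/-- Membership in the Gårding cone `Γ_m = {λ : σ_j(λ) > 0 for all 1 ≤ j ≤ m}`. -/
def inGamma (n m : ℕ) (lam : Fin n → ℝ) : Prop :=
  ∀ j : ℕ, 1 ≤ j → j ≤ m → 0 < esymmVec n j lam

/-!
Write `Q_m(x) = σ_{m+1}(x) / σ_m(x)` and `x|i` for `x` with the coordinate `i` removed. Two facts
are proved together by induction on `m`: `Q_m` is superadditive on `Γ_m` (so `Γ_{m+1}` is closed
under addition), and `x ∈ Γ_{m+1}` implies `x|i ∈ Γ_m`.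

Superadditivity at level `m + 1` follows from the identity
`(m + 2) Q_{m+1}(x) = σ_1(x) - ∑ᵢ xᵢ² / (xᵢ + Q_m(x|i))`, superadditivity of `Q_m` on the `x|i`
and Engel's form `(u + v)² / (a + b) ≤ u² / a + v² / b` of Cauchy–Schwarz. For the restriction
property, if `σ_{m+1}(x|i) ≤ 0` for some `x ∈ Γ_{m+2}`, then `σ_{m+1}(·|i)` vanishes at some `y` on
the segment from `x` to `(1, …, 1)`, which lies in the convex cone `Γ_{m+2}`; there
`σ_m(y|i) > 0` and `σ_{m+2}(y|i) = σ_{m+2}(y) > 0`, against Newton's inequality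
`σ_m σ_{m+2} ≤ c σ_{m+1}²`.

For matrices, let `W` diagonalize `A + B`. The diagonals of `Wᵀ A W` and `Wᵀ B W` add up to
`λ(A + B)`, and by Schur each is `S λ(A)` (resp. `S' λ(B)`) with `S` doubly stochastic. By
Birkhoff, `S λ` is a convex combination of permutations of `λ`, so superadditivity, homogeneity
and symmetry of `Q_m` give `Q_m(S λ) ≥ Q_m(λ)`.
-/

open Polynomial

namespace Multiset

section CommSemiring

variable {R : Type*} [CommSemiring R]

@[simp]
theorem esymm_zero (s : Multiset R) : s.esymm 0 = 1 := by
  simp [esymm, powersetCard_zero_left]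

theorem esymm_one (s : Multiset R) : s.esymm 1 = s.sum := by
  simp [esymm, powersetCard_one]

theorem esymm_cons_succ (a : R) (s : Multiset R) (k : ℕ) :
    (a ::ₘ s).esymm (k + 1) = a * s.esymm k + s.esymm (k + 1) := by
  simp [esymm, powersetCard_cons, sum_map_mul_left, add_comm]

theorem esymm_eq_zero_of_card_lt {s : Multiset R} {k : ℕ} (h : card s < k) : s.esymm k = 0 := by
  simp [esymm, powersetCard_eq_empty _ h]

theorem esymm_card (s : Multiset R) : s.esymm (card s) = s.prod := by
  induction s using Multiset.induction with
  | empty => simp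
  | cons a s ih =>
    rw [card_cons, esymm_cons_succ, ih, esymm_eq_zero_of_card_lt (Nat.lt_succ_self _), prod_cons,
      add_zero]

end CommSemiring

theorem two_mul_esymm_two {R : Type*} [CommRing R] (s : Multiset R) :
    2 * s.esymm 2 = s.sum ^ 2 - (s.map (· ^ 2)).sum := by
  induction s using Multiset.induction with
  | empty => simp [esymm_eq_zero_of_card_lt (s := (0 : Multiset R)) (k := 2) (by simp)]
  | cons a s ih =>
    rw [esymm_cons_succ, esymm_one, sum_cons, map_cons, sum_cons]
    linear_combination ih

theorem prod_mul_esymm_map_inv {K : Type*} [Field K] {s : Multiset K} (hs : (0 : K) ∉ s)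
    {k l : ℕ} (hkl : k + l = card s) : s.prod * (s.map (·⁻¹)).esymm l = s.esymm k := by
  induction s using Multiset.induction generalizing k l with
  | empty =>
    obtain ⟨rfl, rfl⟩ : k = 0 ∧ l = 0 := by simpa using hkl
    simp
  | cons a s ih =>
    have ha : a ≠ 0 := fun h => hs (h ▸ mem_cons_self a s)
    have hs' : (0 : K) ∉ s := fun h => hs (mem_cons_of_mem h)
    rw [card_cons] at hkl
    rcases l with _ | l
    · rw [add_zero] at hkl
      rw [hkl, esymm_zero, mul_one, ← card_cons, esymm_card]
    have hsplit : a * s.prod * (a⁻¹ * (s.map (·⁻¹)).esymm l + (s.map (·⁻¹)).esymm (l + 1)) =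
        s.prod * (s.map (·⁻¹)).esymm l + a * (s.prod * (s.map (·⁻¹)).esymm (l + 1)) := by
      field_simp
    rw [map_cons, prod_cons, esymm_cons_succ, hsplit, ih hs' (by omega : k + l = card s)]
    rcases k with _ | k
    · rw [esymm_eq_zero_of_card_lt (s := s.map (·⁻¹)) (k := l + 1) (by simp; omega)]
      simp
    · rw [esymm_cons_succ, ← ih hs' (by omega : k + (l + 1) = card s)]
      ring

theorem sq_sum_le_card_mul_sum_sq {R : Type*} [CommRing R] [LinearOrder R]
    [IsStrictOrderedRing R] (s : Multiset R) :
    s.sum ^ 2 ≤ card s * (s.map (· ^ 2)).sum := by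
  have h := _root_.sq_sum_le_card_mul_sum_sq (s := (Finset.univ : Finset s)) (f := fun x => (x : R))
  rw [Finset.sum_eq_multiset_sum, Finset.sum_eq_multiset_sum, map_univ_coe, Finset.card_univ,
    card_coe] at h
  convert h using 3
  exact (map_univ_comp_coe s (· ^ 2)).symm

/-- For `j > card s` numerator and denominator both vanish and the value is `0`, which makes
Newton's inequality below hold for every `j`. -/
noncomputable def esymmMean (s : Multiset ℝ) (j : ℕ) : ℝ :=
  s.esymm j / (card s).choose j

theorem esymmMean_pos {s : Multiset ℝ} {j : ℕ} (h : 0 < s.esymm j) : 0 < s.esymmMean j := by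
  have hj : j ≤ card s := by
    by_contra! hlt
    exact h.ne' (esymm_eq_zero_of_card_lt hlt)
  unfold esymmMean
  have := Nat.choose_pos hj
  positivity

theorem esymmMean_zero_mul_esymmMean_two_le (s : Multiset ℝ) :
    s.esymmMean 0 * s.esymmMean 2 ≤ s.esymmMean 1 ^ 2 := by
  rcases lt_or_ge (card s) 2 with hN | hN
  · simp [esymmMean, esymm_eq_zero_of_card_lt hN, sq_nonneg]
  have hN' : (2 : ℝ) ≤ card s := by exact_mod_cast hN
  have h2 := two_mul_esymm_two s
  have hcs := sq_sum_le_card_mul_sum_sq s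
  simp only [esymmMean, esymm_zero, Nat.choose_zero_right, Nat.cast_one, div_one, one_mul,
    Nat.choose_one_right, esymm_one, Nat.cast_choose_two]
  rw [div_pow, div_le_div_iff₀ (by nlinarith) (by positivity)]
  nlinarith

theorem esymmMean_eq_prod_mul_esymmMean_map_inv {s : Multiset ℝ} (hs : (0 : ℝ) ∉ s) {k l : ℕ}
    (hkl : k + l = card s) : s.esymmMean k = s.prod * (s.map (·⁻¹)).esymmMean l := by
  rw [esymmMean, esymmMean, card_map, ← prod_mul_esymm_map_inv hs hkl, ← hkl,
    Nat.choose_symm_add, mul_div_assoc]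

theorem esymmMean_mul_esymmMean_le_sq_of_card_eq {s : Multiset ℝ} {j : ℕ} (hs : card s = j + 2) :
    s.esymmMean j * s.esymmMean (j + 2) ≤ s.esymmMean (j + 1) ^ 2 := by
  by_cases h0 : (0 : ℝ) ∈ s
  · have htop : s.esymm (j + 2) = 0 := by rw [← hs, esymm_card, prod_eq_zero h0]
    simp [esymmMean, htop, sq_nonneg]
  -- Passing to reciprocals turns `σ_j, σ_{j+1}, σ_{j+2}` into `σ_2, σ_1, σ_0`.
  set w := s.map (·⁻¹)
  rw [esymmMean_eq_prod_mul_esymmMean_map_inv h0 (k := j) (l := 2) (by omega),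
    esymmMean_eq_prod_mul_esymmMean_map_inv h0 (k := j + 1) (l := 1) (by omega),
    esymmMean_eq_prod_mul_esymmMean_map_inv h0 (k := j + 2) (l := 0) (by omega)]
  calc s.prod * w.esymmMean 2 * (s.prod * w.esymmMean 0)
      = s.prod ^ 2 * (w.esymmMean 0 * w.esymmMean 2) := by ring
    _ ≤ s.prod ^ 2 * w.esymmMean 1 ^ 2 := by
      gcongr
      exact esymmMean_zero_mul_esymmMean_two_le w
    _ = (s.prod * w.esymmMean 1) ^ 2 := by ring

theorem exists_esymmMean_eq_of_card_eq_succ (s : Multiset ℝ) {n : ℕ} (hs : card s = n + 1) :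
    ∃ t : Multiset ℝ, card t = n ∧ ∀ l ≤ n, t.esymmMean l = s.esymmMean l := by
  -- `t` is the multiset of roots of `P'`, all real by Rolle's theorem; Vieta compares coefficients.
  set P : ℝ[X] := (s.map fun r => X - C r).prod
  have hPdeg : P.natDegree = n + 1 := by rw [natDegree_multiset_prod_X_sub_C_eq_card, hs]
  have hPcoeff : ∀ l ≤ n + 1, P.coeff (n + 1 - l) = (-1) ^ l * s.esymm l := by
    intro l hl
    rw [prod_X_sub_C_coeff s (by omega), hs, Nat.sub_sub_self hl]
  set Q := derivative P
  have hQcoeff : ∀ l ≤ n, Q.coeff (n - l) = (-1) ^ l * s.esymm l * (n + 1 - l : ℕ) := by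
    intro l hl
    rw [coeff_derivative, show n - l + 1 = n + 1 - l by omega, hPcoeff l (by omega)]
    push_cast [Nat.cast_sub hl, Nat.cast_sub (hl.trans n.le_succ)]
    ring
  have hQdeg_le : Q.natDegree ≤ n := (natDegree_derivative_le P).trans (by omega)
  have hQroots_ge : n + 1 ≤ card Q.roots + 1 := by
    have := card_roots_le_derivative P
    rwa [roots_multiset_prod_X_sub_C, hs] at this
  have hQdeg : Q.natDegree = n := le_antisymm hQdeg_le (by have := Q.card_roots'; omega)
  have hQroots : card Q.roots = Q.natDegree := by have := Q.card_roots'; omega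
  have hQlead : Q.leadingCoeff = n + 1 := by
    rw [leadingCoeff, hQdeg, ← Nat.sub_zero n, hQcoeff 0 n.zero_le]
    simp
  refine ⟨Q.roots, hQroots.trans hQdeg, fun l hl => ?_⟩
  have hvieta := coeff_eq_esymm_roots_of_card hQroots (show n - l ≤ Q.natDegree by omega)
  rw [hQcoeff l hl, hQlead, hQdeg, Nat.sub_sub_self hl] at hvieta
  have key : (n + 1 : ℝ) * Q.roots.esymm l = (n + 1 - l : ℕ) * s.esymm l := by
    apply mul_left_cancel₀ (pow_ne_zero l (neg_ne_zero.2 one_ne_zero) : ((-1 : ℝ) ^ l) ≠ 0)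
    linear_combination -hvieta
  have hchoose : ((n + 1).choose l : ℝ) * (n + 1 - l : ℕ) = n.choose l * (n + 1) := by
    exact_mod_cast (Nat.choose_mul_succ_eq n l).symm
  have hnl : (0 : ℝ) < (n + 1 - l : ℕ) := by exact_mod_cast (by omega : 0 < n + 1 - l)
  have hC : (0 : ℝ) < n.choose l := by exact_mod_cast Nat.choose_pos hl
  have hC' : (0 : ℝ) < (n + 1).choose l := by exact_mod_cast Nat.choose_pos (by omega)
  rw [esymmMean, esymmMean, hQroots, hQdeg, hs, div_eq_div_iff hC.ne' hC'.ne']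
  apply mul_left_cancel₀ hnl.ne'
  linear_combination Q.roots.esymm l * hchoose + (n.choose l : ℝ) * key

theorem esymmMean_mul_esymmMean_le_sq (s : Multiset ℝ) (j : ℕ) :
    s.esymmMean j * s.esymmMean (j + 2) ≤ s.esymmMean (j + 1) ^ 2 := by
  rcases lt_or_ge (card s) (j + 2) with hlt | hge
  · simp [esymmMean, esymm_eq_zero_of_card_lt hlt, sq_nonneg]
  obtain ⟨N, hN⟩ : ∃ N, card s = j + 2 + N := ⟨card s - (j + 2), by omega⟩
  induction N generalizing s with
  | zero => exact esymmMean_mul_esymmMean_le_sq_of_card_eq hN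
  | succ N ih =>
    obtain ⟨t, ht, hmean⟩ := exists_esymmMean_eq_of_card_eq_succ s (n := j + 2 + N) (by omega)
    rw [← hmean j (by omega), ← hmean (j + 1) (by omega), ← hmean (j + 2) (by omega)]
    exact ih t (by omega) ht

theorem esymm_succ_ne_zero {s : Multiset ℝ} {j : ℕ} (h₀ : 0 < s.esymm j)
    (h₂ : 0 < s.esymm (j + 2)) : s.esymm (j + 1) ≠ 0 := by
  intro h₁
  have hnewton := esymmMean_mul_esymmMean_le_sq s j
  rw [show s.esymmMean (j + 1) = 0 by simp [esymmMean, h₁], sq, mul_zero] at hnewton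
  exact hnewton.not_gt (mul_pos (esymmMean_pos h₀) (esymmMean_pos h₂))

end Multiset

theorem add_sq_div_le_of_add_le {a b c : ℝ} (ha : 0 < a) (hb : 0 < b) (hc : a + b ≤ c) (u v : ℝ) :
    (u + v) ^ 2 / c ≤ u ^ 2 / a + v ^ 2 / b :=
  calc (u + v) ^ 2 / c ≤ (u + v) ^ 2 / (a + b) := by gcongr
    _ ≤ u ^ 2 / a + v ^ 2 / b := by
      rw [div_add_div _ _ ha.ne' hb.ne', div_le_div_iff₀ (by positivity) (by positivity)]
      nlinarith [sq_nonneg (u * b - v * a), mul_pos ha hb]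

section EsymmOn

variable {ι R : Type*} [CommSemiring R]

noncomputable def esymmOn (s : Finset ι) (j : ℕ) (x : ι → R) : R :=
  ∑ T ∈ s.powersetCard j, ∏ i ∈ T, x i

theorem esymmOn_eq_esymm_map (s : Finset ι) (j : ℕ) (x : ι → R) :
    esymmOn s j x = (s.val.map x).esymm j :=
  (Finset.esymm_map_val x s j).symm

@[simp]
theorem esymmOn_zero (s : Finset ι) (x : ι → R) : esymmOn s 0 x = 1 := by
  simp [esymmOn_eq_esymm_map]

theorem esymmOn_one (s : Finset ι) (x : ι → R) : esymmOn s 1 x = ∑ i ∈ s, x i := by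
  rw [esymmOn_eq_esymm_map, Multiset.esymm_one, Finset.sum_map_val]

theorem esymmOn_eq_zero_of_card_lt {s : Finset ι} {j : ℕ} (h : s.card < j) (x : ι → R) :
    esymmOn s j x = 0 := by
  rw [esymmOn_eq_esymm_map, Multiset.esymm_eq_zero_of_card_lt (by simpa using h)]

theorem esymmOn_smul (s : Finset ι) (j : ℕ) (c : R) (x : ι → R) :
    esymmOn s j (c • x) = c ^ j * esymmOn s j x := by
  simp only [esymmOn, Finset.mul_sum, Pi.smul_apply, smul_eq_mul, Finset.prod_mul_distrib,
    Finset.prod_const]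
  refine Finset.sum_congr rfl fun T hT => ?_
  rw [(Finset.mem_powersetCard.1 hT).2]

theorem esymmOn_const_one (s : Finset ι) (j : ℕ) : esymmOn s j (1 : ι → R) = s.card.choose j := by
  simp [esymmOn]

theorem esymmOn_comp_perm [Fintype ι] (j : ℕ) (x : ι → R) (σ : Equiv.Perm ι) :
    esymmOn Finset.univ j (x ∘ σ) = esymmOn Finset.univ j x := by
  rw [esymmOn_eq_esymm_map, esymmOn_eq_esymm_map, ← Multiset.map_map,
    Multiset.map_univ_val_equiv]

theorem continuous_esymmOn [TopologicalSpace R] [IsTopologicalSemiring R] (s : Finset ι) (j : ℕ) :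
    Continuous (esymmOn (R := R) s j) := by
  unfold esymmOn
  fun_prop

variable [DecidableEq ι]

theorem esymmOn_insert_succ {s : Finset ι} {a : ι} (ha : a ∉ s) (j : ℕ) (x : ι → R) :
    esymmOn (insert a s) (j + 1) x = x a * esymmOn s j x + esymmOn s (j + 1) x := by
  simp only [esymmOn_eq_esymm_map, Finset.insert_val_of_notMem ha, Multiset.map_cons,
    Multiset.esymm_cons_succ]

theorem esymmOn_succ_of_mem {s : Finset ι} {i : ι} (hi : i ∈ s) (j : ℕ) (x : ι → R) :
    esymmOn s (j + 1) x = x i * esymmOn (s.erase i) j x + esymmOn (s.erase i) (j + 1) x := by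
  conv_lhs => rw [← Finset.insert_erase hi]
  exact esymmOn_insert_succ (Finset.notMem_erase i s) j x

theorem sum_mul_esymmOn_erase (s : Finset ι) (j : ℕ) (x : ι → R) :
    ∑ i ∈ s, x i * esymmOn (s.erase i) j x = (j + 1) * esymmOn s (j + 1) x := by
  induction s using Finset.induction_on generalizing j with
  | empty => simp [esymmOn_eq_zero_of_card_lt (s := (∅ : Finset ι)) (j := j + 1) (by simp)]
  | insert a s ha ih =>
    have herase : ∀ i ∈ s, (insert a s).erase i = insert a (s.erase i) := fun i hi =>
      Finset.erase_insert_of_ne (ne_of_mem_of_not_mem hi ha).symm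
    rw [Finset.sum_insert ha, Finset.erase_insert ha, Finset.sum_congr rfl fun i hi => by
      rw [herase i hi]]
    rcases j with _ | j
    · simp [esymmOn_one, Finset.sum_insert ha]
    simp only [esymmOn_insert_succ (fun h => ha (Finset.mem_of_mem_erase h)), mul_add,
      Finset.sum_add_distrib, esymmOn_insert_succ ha]
    rw [Finset.sum_congr rfl fun i _ => mul_left_comm (x i) (x a) _, ← Finset.mul_sum, ih, ih]
    push_cast
    ring

end EsymmOn

section GardingCone

variable {ι : Type*} {s : Finset ι} {m : ℕ} {x y : ι → ℝ}

def gardingCone (s : Finset ι) (m : ℕ) : Set (ι → ℝ) :=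
  {x | ∀ j ≤ m, 0 < esymmOn s j x}

noncomputable def esymmRatio (s : Finset ι) (m : ℕ) (x : ι → ℝ) : ℝ :=
  esymmOn s (m + 1) x / esymmOn s m x

theorem mem_gardingCone_zero (s : Finset ι) (x : ι → ℝ) : x ∈ gardingCone s 0 := by
  intro j hj
  simp [Nat.le_zero.1 hj]

theorem mem_gardingCone_succ :
    x ∈ gardingCone s (m + 1) ↔ x ∈ gardingCone s m ∧ 0 < esymmOn s (m + 1) x := by
  refine ⟨fun h => ⟨fun j hj => h j (hj.trans m.le_succ), h _ le_rfl⟩, fun ⟨h, h'⟩ j hj => ?_⟩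
  rcases hj.lt_or_eq with hj | rfl
  exacts [h j (Nat.le_of_lt_succ hj), h']

theorem gardingCone_antitone (s : Finset ι) : Antitone (gardingCone s) :=
  fun _ _ h _ hx j hj => hx j (hj.trans h)

theorem card_le_of_mem_gardingCone (hx : x ∈ gardingCone s m) : m ≤ s.card := by
  by_contra! h
  exact (hx m le_rfl).ne' (esymmOn_eq_zero_of_card_lt h x)

theorem one_mem_gardingCone (h : m ≤ s.card) : (1 : ι → ℝ) ∈ gardingCone s m := by
  intro j hj
  rw [esymmOn_const_one]
  exact_mod_cast Nat.choose_pos (hj.trans h)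

theorem smul_mem_gardingCone {c : ℝ} (hc : 0 < c) (hx : x ∈ gardingCone s m) :
    c • x ∈ gardingCone s m := by
  intro j hj
  rw [esymmOn_smul]
  exact mul_pos (pow_pos hc j) (hx j hj)

theorem comp_perm_mem_gardingCone [Fintype ι] (σ : Equiv.Perm ι)
    (hx : x ∈ gardingCone Finset.univ m) : x ∘ σ ∈ gardingCone Finset.univ m := by
  intro j hj
  rw [esymmOn_comp_perm]
  exact hx j hj

theorem esymmRatio_pos (hx : x ∈ gardingCone s (m + 1)) : 0 < esymmRatio s m x :=
  div_pos (hx _ le_rfl) (hx _ m.le_succ)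

theorem esymmRatio_smul {c : ℝ} (hc : c ≠ 0) (x : ι → ℝ) :
    esymmRatio s m (c • x) = c * esymmRatio s m x := by
  rw [esymmRatio, esymmRatio, esymmOn_smul, esymmOn_smul, pow_succ, mul_assoc,
    mul_div_mul_left _ _ (pow_ne_zero m hc), mul_div_assoc]

theorem esymmRatio_comp_perm [Fintype ι] (x : ι → ℝ) (σ : Equiv.Perm ι) :
    esymmRatio Finset.univ m (x ∘ σ) = esymmRatio Finset.univ m x := by
  rw [esymmRatio, esymmRatio, esymmOn_comp_perm, esymmOn_comp_perm]

theorem convex_gardingCone_of_add_mem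
    (hadd : ∀ x ∈ gardingCone s m, ∀ y ∈ gardingCone s m, x + y ∈ gardingCone s m) :
    Convex ℝ (gardingCone s m) :=
  convex_iff_forall_pos.2 fun _ hx _ hy _ _ ha hb _ =>
    hadd _ (smul_mem_gardingCone ha hx) _ (smul_mem_gardingCone hb hy)

theorem add_mem_gardingCone_succ (hx : x ∈ gardingCone s (m + 1)) (hy : y ∈ gardingCone s (m + 1))
    (hxy : x + y ∈ gardingCone s m)
    (hsuper : esymmRatio s m x + esymmRatio s m y ≤ esymmRatio s m (x + y)) :
    x + y ∈ gardingCone s (m + 1) := by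
  refine mem_gardingCone_succ.2 ⟨hxy, ?_⟩
  have hratio := (add_pos (esymmRatio_pos hx) (esymmRatio_pos hy)).trans_le hsuper
  exact (div_pos_iff_of_pos_right (hxy m le_rfl)).1 hratio

variable [DecidableEq ι]

theorem esymmOn_div_esymmOn_erase {i : ι} (hi : i ∈ s) (h : esymmOn (s.erase i) m x ≠ 0) :
    esymmOn s (m + 1) x / esymmOn (s.erase i) m x = x i + esymmRatio (s.erase i) m x := by
  rw [esymmOn_succ_of_mem hi, esymmRatio, add_div, mul_div_cancel_right₀ _ h]

theorem add_two_mul_esymmRatio_succ (hs : esymmOn s (m + 1) x ≠ 0)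
    (herase : ∀ i ∈ s, esymmOn (s.erase i) m x ≠ 0) :
    (m + 2) * esymmRatio s (m + 1) x =
      ∑ i ∈ s, x i - ∑ i ∈ s, x i ^ 2 / (x i + esymmRatio (s.erase i) m x) := by
  have hterm : ∀ i ∈ s, x i ^ 2 / (x i + esymmRatio (s.erase i) m x) =
      (x i * esymmOn s (m + 1) x - x i * esymmOn (s.erase i) (m + 1) x) / esymmOn s (m + 1) x := by
    intro i hi
    rw [← esymmOn_div_esymmOn_erase hi (herase i hi), div_div_eq_mul_div,
      esymmOn_succ_of_mem hi m x]
    ring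
  rw [Finset.sum_congr rfl hterm, ← Finset.sum_div, Finset.sum_sub_distrib,
    sum_mul_esymmOn_erase, ← Finset.sum_mul, esymmRatio]
  field_simp
  push_cast
  ring

theorem esymmRatio_add_le_succ
    (herase : ∀ z ∈ gardingCone s (m + 1), ∀ i ∈ s, z ∈ gardingCone (s.erase i) m)
    (hsuper : ∀ i ∈ s, ∀ x ∈ gardingCone (s.erase i) m, ∀ y ∈ gardingCone (s.erase i) m,
      esymmRatio (s.erase i) m x + esymmRatio (s.erase i) m y ≤ esymmRatio (s.erase i) m (x + y))
    (hx : x ∈ gardingCone s (m + 1)) (hy : y ∈ gardingCone s (m + 1))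
    (hxy : x + y ∈ gardingCone s (m + 1)) :
    esymmRatio s (m + 1) x + esymmRatio s (m + 1) y ≤ esymmRatio s (m + 1) (x + y) := by
  have hden : ∀ z ∈ gardingCone s (m + 1), ∀ i ∈ s, 0 < z i + esymmRatio (s.erase i) m z := by
    intro z hz i hi
    rw [← esymmOn_div_esymmOn_erase hi (herase z hz i hi m le_rfl).ne']
    exact div_pos (hz _ le_rfl) (herase z hz i hi m le_rfl)
  have hid : ∀ z ∈ gardingCone s (m + 1), (m + 2) * esymmRatio s (m + 1) z =
      ∑ i ∈ s, z i - ∑ i ∈ s, z i ^ 2 / (z i + esymmRatio (s.erase i) m z) := fun z hz =>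
    add_two_mul_esymmRatio_succ (hz _ le_rfl).ne' fun i hi => (herase z hz i hi m le_rfl).ne'
  have hengel : ∑ i ∈ s, (x i + y i) ^ 2 / (x i + y i + esymmRatio (s.erase i) m (x + y)) ≤
      ∑ i ∈ s, (x i ^ 2 / (x i + esymmRatio (s.erase i) m x) +
        y i ^ 2 / (y i + esymmRatio (s.erase i) m y)) := by
    refine Finset.sum_le_sum fun i hi => add_sq_div_le_of_add_le (hden x hx i hi) (hden y hy i hi)
      ?_ _ _
    linarith [hsuper i hi x (herase x hx i hi) y (herase y hy i hi)]
  have hid_xy := hid _ hxy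
  simp only [Pi.add_apply] at hid_xy
  rw [← mul_le_mul_iff_right₀ (by positivity : (0 : ℝ) < m + 2), mul_add, hid x hx, hid y hy,
    hid_xy, Finset.sum_add_distrib]
  rw [Finset.sum_add_distrib] at hengel
  linarith

theorem mem_gardingCone_erase_succ
    (hadd : ∀ x ∈ gardingCone s (m + 2), ∀ y ∈ gardingCone s (m + 2), x + y ∈ gardingCone s (m + 2))
    (herase : ∀ z ∈ gardingCone s (m + 1), ∀ i ∈ s, z ∈ gardingCone (s.erase i) m)
    (hx : x ∈ gardingCone s (m + 2)) {i : ι} (hi : i ∈ s) :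
    x ∈ gardingCone (s.erase i) (m + 1) := by
  refine mem_gardingCone_succ.2 ⟨herase x (gardingCone_antitone s (m + 1).le_succ hx) i hi, ?_⟩
  by_contra! hneg
  have hcard : m + 1 ≤ (s.erase i).card := by
    have := card_le_of_mem_gardingCone hx
    rw [Finset.card_erase_of_mem hi]
    omega
  have hone : (1 : ι → ℝ) ∈ gardingCone s (m + 2) :=
    one_mem_gardingCone (card_le_of_mem_gardingCone hx)
  set φ : ℝ → ℝ := fun t => esymmOn (s.erase i) (m + 1) (x + t • (1 - x))
  have hφ : Continuous φ := (continuous_esymmOn _ _).comp (by fun_prop)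
  have hφ0 : φ 0 ≤ 0 := by simpa [φ] using hneg
  have hφ1 : 0 < φ 1 := by
    simpa [φ] using one_mem_gardingCone hcard (m + 1) le_rfl
  obtain ⟨t, ht, hφt⟩ := intermediate_value_Icc zero_le_one hφ.continuousOn ⟨hφ0, hφ1.le⟩
  set z := x + t • (1 - x)
  have hz : z ∈ gardingCone s (m + 2) :=
    (convex_gardingCone_of_add_mem hadd).add_smul_sub_mem hx hone ht
  have h₁ : esymmOn (s.erase i) (m + 1) z = 0 := hφt
  have h₀ : 0 < esymmOn (s.erase i) m z :=
    herase z (gardingCone_antitone s (m + 1).le_succ hz) i hi m le_rfl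
  have h₂ : 0 < esymmOn (s.erase i) (m + 2) z := by
    have := hz (m + 2) le_rfl
    rwa [esymmOn_succ_of_mem hi, h₁, mul_zero, zero_add] at this
  rw [esymmOn_eq_esymm_map] at h₀ h₁ h₂
  exact Multiset.esymm_succ_ne_zero h₀ h₂ h₁

theorem gardingCone_erase_and_superadditive (m : ℕ) (s : Finset ι) :
    (∀ x ∈ gardingCone s (m + 1), ∀ i ∈ s, x ∈ gardingCone (s.erase i) m) ∧
      ∀ x ∈ gardingCone s m, ∀ y ∈ gardingCone s m, x + y ∈ gardingCone s m ∧
        esymmRatio s m x + esymmRatio s m y ≤ esymmRatio s m (x + y) := by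
  induction m generalizing s with
  | zero =>
    refine ⟨fun x _ _ _ => mem_gardingCone_zero _ x, fun x _ y _ => ⟨mem_gardingCone_zero s _, ?_⟩⟩
    simp [esymmRatio, esymmOn_one, Finset.sum_add_distrib]
  | succ m ih =>
    obtain ⟨herase, hsuper⟩ := ih s
    have hmono := gardingCone_antitone s m.le_succ
    have hmono' := gardingCone_antitone s (m + 1).le_succ
    have hadd : ∀ x ∈ gardingCone s (m + 1), ∀ y ∈ gardingCone s (m + 1),
        x + y ∈ gardingCone s (m + 1) := fun x hx y hy =>
      add_mem_gardingCone_succ hx hy (hsuper x (hmono hx) y (hmono hy)).1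
        (hsuper x (hmono hx) y (hmono hy)).2
    have hsuper' : ∀ x ∈ gardingCone s (m + 1), ∀ y ∈ gardingCone s (m + 1),
        esymmRatio s (m + 1) x + esymmRatio s (m + 1) y ≤ esymmRatio s (m + 1) (x + y) :=
      fun x hx y hy => esymmRatio_add_le_succ herase
        (fun i _ x hx y hy => ((ih (s.erase i)).2 x hx y hy).2) hx hy (hadd x hx y hy)
    have hadd' : ∀ x ∈ gardingCone s (m + 2), ∀ y ∈ gardingCone s (m + 2),
        x + y ∈ gardingCone s (m + 2) := fun x hx y hy =>
      add_mem_gardingCone_succ hx hy (hadd x (hmono' hx) y (hmono' hy))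
        (hsuper' x (hmono' hx) y (hmono' hy))
    exact ⟨fun x hx i hi => mem_gardingCone_erase_succ hadd' herase hx hi,
      fun x hx y hy => ⟨hadd x hx y hy, hsuper' x hx y hy⟩⟩

theorem add_mem_gardingCone (hx : x ∈ gardingCone s m) (hy : y ∈ gardingCone s m) :
    x + y ∈ gardingCone s m :=
  ((gardingCone_erase_and_superadditive m s).2 x hx y hy).1

theorem esymmRatio_add_le (hx : x ∈ gardingCone s m) (hy : y ∈ gardingCone s m) :
    esymmRatio s m x + esymmRatio s m y ≤ esymmRatio s m (x + y) :=
  ((gardingCone_erase_and_superadditive m s).2 x hx y hy).2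

end GardingCone

section Concavity

open Matrix

variable {ι κ : Type*} [DecidableEq ι] {s : Finset ι} {m : ℕ}

theorem sum_smul_mem_gardingCone_and_le {t : Finset κ} (ht : t.Nonempty) {w : κ → ℝ}
    {v : κ → ι → ℝ} (hw : ∀ a ∈ t, 0 < w a) (hv : ∀ a ∈ t, v a ∈ gardingCone s m) :
    ∑ a ∈ t, w a • v a ∈ gardingCone s m ∧
      ∑ a ∈ t, w a * esymmRatio s m (v a) ≤ esymmRatio s m (∑ a ∈ t, w a • v a) := by
  induction ht using Finset.Nonempty.cons_induction with
  | singleton a =>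
    simp only [Finset.sum_singleton, esymmRatio_smul (hw a (Finset.mem_singleton_self a)).ne']
    exact ⟨smul_mem_gardingCone (hw a (by simp)) (hv a (by simp)), le_rfl⟩
  | cons a t _ _ ih =>
    obtain ⟨hmem, hle⟩ := ih (fun b hb => hw b (Finset.mem_cons_of_mem hb))
      (fun b hb => hv b (Finset.mem_cons_of_mem hb))
    have hwa := hw a (Finset.mem_cons_self a t)
    have hva := smul_mem_gardingCone hwa (hv a (Finset.mem_cons_self a t))
    rw [Finset.sum_cons, Finset.sum_cons]
    refine ⟨add_mem_gardingCone hva hmem, ?_⟩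
    calc w a * esymmRatio s m (v a) + ∑ b ∈ t, w b * esymmRatio s m (v b)
        ≤ esymmRatio s m (w a • v a) + esymmRatio s m (∑ b ∈ t, w b • v b) := by
          rw [esymmRatio_smul hwa.ne']
          linarith
      _ ≤ _ := esymmRatio_add_le hva hmem

theorem mulVec_mem_gardingCone_and_esymmRatio_le [Fintype ι] {S : Matrix ι ι ℝ}
    (hS : S ∈ doublyStochastic ℝ ι) {x : ι → ℝ} (hx : x ∈ gardingCone Finset.univ m) :
    S *ᵥ x ∈ gardingCone Finset.univ m ∧
      esymmRatio Finset.univ m x ≤ esymmRatio Finset.univ m (S *ᵥ x) := by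
  obtain ⟨w, hw0, hw1, rfl⟩ := exists_eq_sum_perm_of_mem_doublyStochastic hS
  set t := Finset.univ.filter fun σ : Equiv.Perm ι => w σ ≠ 0
  have hwt : ∑ σ ∈ t, w σ = 1 := by rw [Finset.sum_filter_ne_zero, hw1]
  have ht : t.Nonempty := Finset.nonempty_of_sum_ne_zero (hwt ▸ one_ne_zero)
  have hmulVec : (∑ σ, w σ • σ.permMatrix ℝ) *ᵥ x = ∑ σ ∈ t, w σ • (x ∘ σ) := by
    simp only [Matrix.sum_mulVec, Matrix.smul_mulVec, Matrix.permMatrix_mulVec]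
    refine (Finset.sum_filter_of_ne fun σ _ h => ?_).symm
    rintro hσ
    simp [hσ] at h
  obtain ⟨hmem, hle⟩ := sum_smul_mem_gardingCone_and_le ht
    (fun σ hσ => (hw0 σ).lt_of_ne (Finset.mem_filter.1 hσ).2.symm)
    (fun σ _ => comp_perm_mem_gardingCone σ hx)
  simp only [esymmRatio_comp_perm, ← Finset.sum_mul, hwt, one_mul] at hle
  exact hmulVec ▸ ⟨hmem, hle⟩

end Concavity

namespace Matrix

variable {n : Type*} [Fintype n] [DecidableEq n]

theorem of_sq_mem_doublyStochastic {U : Matrix n n ℝ} (hU : U ∈ unitaryGroup n ℝ) :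
    of (fun i j => U i j ^ 2) ∈ doublyStochastic ℝ n := by
  have hrow : ∀ i, ∑ j, U i j ^ 2 = 1 := fun i => by
    simpa [mul_apply, sq] using congr_fun₂ (mem_unitaryGroup_iff.1 hU) i i
  have hcol : ∀ j, ∑ i, U i j ^ 2 = 1 := fun j => by
    simpa [mul_apply, sq] using congr_fun₂ (mem_unitaryGroup_iff'.1 hU) j j
  exact mem_doublyStochastic_iff_sum.2 ⟨fun i j => sq_nonneg _, hrow, hcol⟩

theorem diag_mul_diagonal_mul_star (U : Matrix n n ℝ) (d : n → ℝ) :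
    (U * diagonal d * star U).diag = of (fun i j => U i j ^ 2) *ᵥ d := by
  ext i
  rw [diag_apply, mul_apply]
  simp only [mul_diagonal, star_apply, star_trivial, mulVec, dotProduct, of_apply]
  exact Finset.sum_congr rfl fun j _ => by ring

namespace IsHermitian

theorem diag_star_eigenvectorUnitary_conj {A : Matrix n n ℝ} (hA : A.IsHermitian) :
    (star (hA.eigenvectorUnitary : Matrix n n ℝ) * A * hA.eigenvectorUnitary).diag =
      hA.eigenvalues := by
  have h := hA.conjStarAlgAut_star_eigenvectorUnitary
  rw [Unitary.conjStarAlgAut_apply, Unitary.coe_star, star_star, RCLike.ofReal_real_eq_id] at h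
  rw [h]
  simp

theorem exists_diag_conj_eq_mulVec_eigenvalues {A : Matrix n n ℝ} (hA : A.IsHermitian)
    {W : Matrix n n ℝ} (hW : W ∈ unitaryGroup n ℝ) :
    ∃ S ∈ doublyStochastic ℝ n, (star W * A * W).diag = S *ᵥ hA.eigenvalues := by
  set V := (hA.eigenvectorUnitary : Matrix n n ℝ)
  have hU : star W * V ∈ unitaryGroup n ℝ :=
    Submonoid.mul_mem _ (Unitary.star_mem hW) hA.eigenvectorUnitary.2
  refine ⟨_, of_sq_mem_doublyStochastic hU, ?_⟩
  rw [← diag_mul_diagonal_mul_star]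
  conv_lhs => rw [hA.spectral_theorem, Unitary.conjStarAlgAut_apply, RCLike.ofReal_real_eq_id]
  simp only [star_mul, star_star, Function.id_comp, Matrix.mul_assoc, V]

end IsHermitian

end Matrix

theorem inGamma_iff_mem_gardingCone {n m : ℕ} {lam : Fin n → ℝ} :
    inGamma n m lam ↔ lam ∈ gardingCone Finset.univ m := by
  refine ⟨fun h j hj => ?_, fun h j _ hj => h j hj⟩
  rcases j with _ | j
  · simp
  · exact h _ j.succ_pos hj

theorem stmt_4_general (n k : ℕ) (hk2 : 2 ≤ k)
    (A B : Matrix (Fin n) (Fin n) ℝ) (hA : A.IsHermitian) (hB : B.IsHermitian)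
    (hAG : inGamma n (k - 1) hA.eigenvalues)
    (hBG : inGamma n (k - 1) hB.eigenvalues) :
    inGamma n (k - 1) (hA.add hB).eigenvalues ∧
      esymmVec n k (hA.add hB).eigenvalues / esymmVec n (k - 1) (hA.add hB).eigenvalues ≥
        esymmVec n k hA.eigenvalues / esymmVec n (k - 1) hA.eigenvalues +
          esymmVec n k hB.eigenvalues / esymmVec n (k - 1) hB.eigenvalues := by
  obtain ⟨m, rfl⟩ : ∃ m, k = m + 1 := ⟨k - 1, by omega⟩
  rw [Nat.add_sub_cancel, inGamma_iff_mem_gardingCone] at hAG hBG ⊢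
  set W := (hA.add hB).eigenvectorUnitary
  obtain ⟨SA, hSA, hdiagA⟩ := hA.exists_diag_conj_eq_mulVec_eigenvalues W.2
  obtain ⟨SB, hSB, hdiagB⟩ := hB.exists_diag_conj_eq_mulVec_eigenvalues W.2
  have hsplit : (hA.add hB).eigenvalues = SA.mulVec hA.eigenvalues + SB.mulVec hB.eigenvalues := by
    rw [← (hA.add hB).diag_star_eigenvectorUnitary_conj, Matrix.mul_add, Matrix.add_mul,
      Matrix.diag_add, hdiagA, hdiagB]
  obtain ⟨hA', hleA⟩ := mulVec_mem_gardingCone_and_esymmRatio_le hSA hAG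
  obtain ⟨hB', hleB⟩ := mulVec_mem_gardingCone_and_esymmRatio_le hSB hBG
  rw [hsplit]
  exact ⟨add_mem_gardingCone hA' hB', (add_le_add hleA hleB).trans (esymmRatio_add_le hA' hB')⟩

/-- Superadditivity of `σ_k/σ_{k-1}` on the cone `Γ_{k-1}` (from the concavity of
`σ_k/σ_{k-1}`): if `A, B ∈ Γ_{k-1}` then `A + B ∈ Γ_{k-1}` and
`σ_k(A+B)/σ_{k-1}(A+B) ≥ σ_k(A)/σ_{k-1}(A) + σ_k(B)/σ_{k-1}(B)`. -/
theorem stmt_4 (n k : ℕ) (hn : 2 ≤ n) (hk2 : 2 ≤ k) (hkn : k ≤ n)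
    (A B : Matrix (Fin n) (Fin n) ℝ) (hA : A.IsHermitian) (hB : B.IsHermitian)
    (hAG : inGamma n (k - 1) hA.eigenvalues)
    (hBG : inGamma n (k - 1) hB.eigenvalues) :
    inGamma n (k - 1) (hA.add hB).eigenvalues ∧
      esymmVec n k (hA.add hB).eigenvalues / esymmVec n (k - 1) (hA.add hB).eigenvalues ≥
        esymmVec n k hA.eigenvalues / esymmVec n (k - 1) hA.eigenvalues +
          esymmVec n k hB.eigenvalues / esymmVec n (k - 1) hB.eigenvalues :=
  stmt_4_general n k hk2 A B hA hB hAG hBG
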